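/- Let K be a field of characteristic zero, let λ_a, λ_b, λ_c ∈ K with λ_b ≠ λ_c, and let R be the quotient of the free associative K-algebra K⟨a,b,c⟩ by the two-sided ideal generated by a² − λ_a, b² − λ_b, c² − λ_c, ab + bc + ca, and ac + cb + ba. Then in R the identity (λ_b − λ_c)·a = cbc − bcb holds (where a, b, c denote the images of the generators in R); in particular R is generated as a K-algebra by the images of b and c. -/
import Mathlib

universe u

noncomputable section

open FreeAlgebra

def FKRel' (K : Type u) [Field K] (la lb lc : K) :
    FreeAlgebra K (Fin 3) → FreeAlgebra K (Fin 3) → Prop := fun x y =>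
  y = 0 ∧
    (x = ι K (0 : Fin 3) * ι K 0 - algebraMap K _ la ∨
     x = ι K (1 : Fin 3) * ι K 1 - algebraMap K _ lb ∨
     x = ι K (2 : Fin 3) * ι K 2 - algebraMap K _ lc ∨
     x = ι K (0 : Fin 3) * ι K 1 + ι K 1 * ι K 2 + ι K 2 * ι K 0 ∨
     x = ι K (0 : Fin 3) * ι K 2 + ι K 2 * ι K 1 + ι K 1 * ι K 0)

/-- If `λ_b ≠ λ_c`, then in the quotient algebra `R` of `K⟨a,b,c⟩` by
`a² − λ_a, b² − λ_b, c² − λ_c, ab + bc + ca, ac + cb + ba` one has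
`(λ_b − λ_c)·a = cbc − bcb`; in particular `R` is generated as a `K`-algebra by the
images of `b` and `c`. -/
theorem deformed_FK3_dual_a_eq_and_generated_by_b_c
    (K : Type u) [Field K] [CharZero K] (la lb lc : K) (h : lb ≠ lc) :
    ((lb - lc) • RingQuot.mkAlgHom K (FKRel' K la lb lc) (ι K (0 : Fin 3)) =
      RingQuot.mkAlgHom K (FKRel' K la lb lc)
          (ι K (2 : Fin 3) * ι K 1 * ι K 2) -
        RingQuot.mkAlgHom K (FKRel' K la lb lc)
          (ι K (1 : Fin 3) * ι K 2 * ι K 1)) ∧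
    Algebra.adjoin K
        {RingQuot.mkAlgHom K (FKRel' K la lb lc) (ι K (1 : Fin 3)),
         RingQuot.mkAlgHom K (FKRel' K la lb lc) (ι K (2 : Fin 3))} = ⊤ := by
  set f := RingQuot.mkAlgHom K (FKRel' K la lb lc) with hf
  set A := f (ι K (0 : Fin 3)) with hA
  set B := f (ι K (1 : Fin 3)) with hB
  set C := f (ι K (2 : Fin 3)) with hC
  have hb2 : B * B = algebraMap K _ lb := by
    have h0 := RingQuot.mkAlgHom_rel K
      (show FKRel' K la lb lc (ι K (1 : Fin 3) * ι K 1 - algebraMap K _ lb) 0 from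
        ⟨rfl, Or.inr (Or.inl rfl)⟩)
    rw [map_sub, map_mul, map_zero, sub_eq_zero] at h0
    simpa [← hf, ← hB] using h0
  have hc2 : C * C = algebraMap K _ lc := by
    have h0 := RingQuot.mkAlgHom_rel K
      (show FKRel' K la lb lc (ι K (2 : Fin 3) * ι K 2 - algebraMap K _ lc) 0 from
        ⟨rfl, Or.inr (Or.inr (Or.inl rfl))⟩)
    rw [map_sub, map_mul, map_zero, sub_eq_zero] at h0
    simpa [← hf, ← hC] using h0
  have hrel : A * B + B * C + C * A = 0 := by
    have h0 := RingQuot.mkAlgHom_rel K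
      (show FKRel' K la lb lc
          (ι K (0 : Fin 3) * ι K 1 + ι K 1 * ι K 2 + ι K 2 * ι K 0) 0 from
        ⟨rfl, Or.inr (Or.inr (Or.inr (Or.inl rfl)))⟩)
    rw [map_add, map_add, map_mul, map_mul, map_mul, map_zero] at h0
    simpa [← hf, ← hA, ← hB, ← hC] using h0
  have h3 : C * A * B + C * B * C + lc • A = 0 := by
    have e : C * A * B + C * B * C + (C * C) * A = C * (A * B + B * C + C * A) := by
      noncomm_ring
    rw [hrel, mul_zero, hc2, ← Algebra.smul_def] at e
    exact e
  have h4 : lb • A + B * C * B + C * A * B = 0 := by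
    have e : A * (B * B) + B * C * B + C * A * B = (A * B + B * C + C * A) * B := by
      noncomm_ring
    rw [hrel, zero_mul, hb2, ← Algebra.commutes, ← Algebra.smul_def] at e
    exact e
  have key : (lb - lc) • A = C * B * C - B * C * B := by
    rw [sub_smul lb lc A, ← sub_eq_zero]
    calc (lb • A - lc • A) - (C * B * C - B * C * B)
        = (lb • A + B * C * B + C * A * B) - (C * A * B + C * B * C + lc • A) := by abel
      _ = 0 := by rw [h3, h4, sub_zero]
  constructor
  · simpa [map_mul, ← hf, ← hA, ← hB, ← hC] using key
  · rw [eq_top_iff]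
    rintro x -
    obtain ⟨y, rfl⟩ := RingQuot.mkAlgHom_surjective K (FKRel' K la lb lc) x
    rw [← hf]
    set S := Algebra.adjoin K ({B, C} : Set _) with hS
    have hBmem : B ∈ S := Algebra.subset_adjoin (by simp)
    have hCmem : C ∈ S := Algebra.subset_adjoin (by simp)
    have hAmem : A ∈ S := by
      have hne : lb - lc ≠ 0 := sub_ne_zero.mpr h
      have : A = (lb - lc)⁻¹ • (C * B * C - B * C * B) := by
        rw [← key, smul_smul, inv_mul_cancel₀ hne, one_smul]
      rw [this]
      exact Subalgebra.smul_mem _ (sub_mem (mul_mem (mul_mem hCmem hBmem) hCmem)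
        (mul_mem (mul_mem hBmem hCmem) hBmem)) _
    induction y using FreeAlgebra.induction with
    | grade0 r => simpa using Subalgebra.algebraMap_mem S r
    | grade1 i =>
      fin_cases i
      · exact hAmem
      · exact hBmem
      · exact hCmem
    | mul x y hx hy => rw [map_mul]; exact mul_mem hx hy
    | add x y hx hy => rw [map_add]; exact add_mem hx hy

end
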